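/- arXiv:0807.1812 — 4 statements merged into one kernel-verified Lean document; each statement's English description precedes it below -/
import Mathlib

section
/- Define u(x,y,t) = sin(πt) cos(πx) cos(πy), f(x,y) = cos(πx) cos(πy), and φ(t) = π cos(πt) + 2π² sin(πt). Then ∂ₜu − ∂ₓₓu − ∂ᵧᵧu = φ(t) f(x,y) for all (x,y,t); ∂ₓu(0,y,t) = ∂ₓu(1,y,t) = ∂ᵧu(x,0,t) = ∂ᵧu(x,1,t) = 0 for all x,y,t; u(x,y,0) = 0 and u(x,y,1) = 0 for all (x,y); and f is not identically zero. (Hence the system without the extra boundary datum u(1,y,t) = 0 admits, besides the trivial solution (0,0), this nontrivial solution, so uniqueness fails.) -/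
open Real

/-- The nontrivial solution `u(x,y,t) = sin(πt) cos(πx) cos(πy)`. -/
noncomputable def uEx (x y t : ℝ) : ℝ := Real.sin (π * t) * Real.cos (π * x) * Real.cos (π * y)

/-- The source profile `f(x,y) = cos(πx) cos(πy)`. -/
noncomputable def fEx (x y : ℝ) : ℝ := Real.cos (π * x) * Real.cos (π * y)

/-- The time factor `φ(t) = π cos(πt) + 2π² sin(πt)`. -/
noncomputable def phiEx (t : ℝ) : ℝ := π * Real.cos (π * t) + 2 * π ^ 2 * Real.sin (π * t)


lemma hd_cos (c x : ℝ) : HasDerivAt (fun s => Real.cos (π * s) * c)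
    (Real.sin (π * x) * (-(π * c))) x := by
  have h := ((Real.hasDerivAt_cos (π * x)).comp x ((hasDerivAt_id x).const_mul π)).mul_const c
  simpa using h.congr_deriv (by ring)

lemma hd_sin (c x : ℝ) : HasDerivAt (fun s => Real.sin (π * s) * c)
    (Real.cos (π * x) * (π * c)) x := by
  have h := ((Real.hasDerivAt_sin (π * x)).comp x ((hasDerivAt_id x).const_mul π)).mul_const c
  simpa using h.congr_deriv (by ring)

lemma deriv_sin_mul (c : ℝ) : deriv (fun s => Real.sin (π * s) * c)
    = fun x => Real.cos (π * x) * (π * c) := funext fun x => (hd_sin c x).deriv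

lemma deriv_cos_mul (c : ℝ) : deriv (fun s => Real.cos (π * s) * c)
    = fun x => Real.sin (π * x) * (-(π * c)) := funext fun x => (hd_cos c x).deriv

lemma iter2_cos (c x : ℝ) : iteratedDeriv 2 (fun s => Real.cos (π * s) * c) x
    = Real.cos (π * x) * (-(π ^ 2 * c)) := by
  rw [iteratedDeriv_succ, iteratedDeriv_one, deriv_cos_mul]
  have : (fun x => Real.sin (π * x) * (-(π * c))) = fun s => Real.sin (π * s) * (-(π * c)) := rfl
  rw [this, deriv_sin_mul]
  ring

/-- Without the extra boundary datum `u(1,y,t) = 0`, the system admits the nontrivial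
solution `(u, f)` above with `g₀ = g₁ = 0`, so uniqueness fails. -/
theorem nonuniqueness_example :
    -- the heat equation ∂ₜu − ∂ₓₓu − ∂ᵧᵧu = φ(t)·f(x,y) everywhere
    (∀ x y t : ℝ,
      deriv (uEx x y) t - iteratedDeriv 2 (fun s => uEx s y t) x
        - iteratedDeriv 2 (fun s => uEx x s t) y = phiEx t * fEx x y)
    -- homogeneous Neumann boundary conditions on all four sides
    ∧ (∀ y t : ℝ, deriv (fun s => uEx s y t) 0 = 0 ∧ deriv (fun s => uEx s y t) 1 = 0)
    ∧ (∀ x t : ℝ, deriv (fun s => uEx x s t) 0 = 0 ∧ deriv (fun s => uEx x s t) 1 = 0)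
    -- zero initial and final data
    ∧ (∀ x y : ℝ, uEx x y 0 = 0 ∧ uEx x y 1 = 0)
    -- f is not identically zero
    ∧ ¬ (∀ x y : ℝ, fEx x y = 0) := by
  have hux : ∀ y t : ℝ, (fun s => uEx s y t)
      = fun s => Real.cos (π * s) * (Real.sin (π * t) * Real.cos (π * y)) :=
    fun y t => funext fun s => by unfold uEx; ring
  have huy : ∀ x t : ℝ, (fun s => uEx x s t)
      = fun s => Real.cos (π * s) * (Real.sin (π * t) * Real.cos (π * x)) :=
    fun x t => funext fun s => by unfold uEx; ring
  have hut : ∀ x y : ℝ, (uEx x y)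
      = fun s => Real.sin (π * s) * (Real.cos (π * x) * Real.cos (π * y)) :=
    fun x y => funext fun s => by unfold uEx; ring
  refine ⟨fun x y t => ?_, fun y t => ?_, fun x t => ?_, fun x y => ?_, ?_⟩
  · rw [hut, hux, huy, deriv_sin_mul, iter2_cos, iter2_cos]
    unfold phiEx fEx; ring
  · rw [hux, deriv_cos_mul]
    constructor <;> simp
  · rw [huy, deriv_cos_mul]
    constructor <;> simp
  · unfold uEx; constructor <;> simp
  · intro h
    have := h 0 0
    simp [fEx] at this
end

section
/- Let φ ∈ L¹(0,1) be not almost everywhere zero. Then for every n ∈ ℤ, the set {α ∈ ℝ : D(φ)(α,n) = 0} has Lebesgue measure zero; consequently, for almost every α ∈ ℝ one has D(φ)(α,n) ≠ 0 for all n ∈ ℤ. -/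
open MeasureTheory Real Set

/-- `D(φ)(α,n) = ∫₀¹ e^{(α²+n²π²)(t−1)} φ(t) dt`. -/
noncomputable def Dker (φ : ℝ → ℝ) (α : ℝ) (n : ℤ) : ℝ :=
  ∫ t in Set.Ioo (0:ℝ) 1, Real.exp ((α^2 + (n:ℝ)^2 * Real.pi^2) * (t - 1)) * φ t

/-!
Writing `s = α² + n²π²`, `D(φ)(α,n) = e^{-s} (M₊(s) - M₋(s))`, where `M±` are the moment
generating functions of the finite measures `φ± dt` on `(0,1)`. These measures have compact
support, so their complex MGFs are entire, and so is `z ↦ M₊(z² + c) - M₋(z² + c)`. An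
uncountable zero set on the real line has an accumulation point, so this function vanishes
identically; as `z ↦ z² + c` is onto `ℂ`, the complex MGFs of `φ⁺ dt` and `φ⁻ dt` agree. Complex
MGFs determine finite measures, hence `φ⁺ = φ⁻` a.e., that is, `φ = 0` a.e.
-/

open Filter Topology ProbabilityTheory

lemma IsCompact.exists_bound_exp_mul {K : Set ℝ} (hK : IsCompact K) (s : ℝ) :
    ∃ C, ∀ t ∈ K, ‖rexp (s * t)‖ ≤ C :=
  hK.exists_bound_of_continuousOn (by fun_prop)

section CompactSupport

variable {μ : Measure ℝ} [IsFiniteMeasure μ] {K : Set ℝ}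

lemma integrableExpSet_id_eq_univ_of_isCompact (hK : IsCompact K) (hμ : ∀ᵐ t ∂μ, t ∈ K) :
    integrableExpSet id μ = univ := by
  refine eq_univ_of_forall fun s => ?_
  obtain ⟨C, hC⟩ := hK.exists_bound_exp_mul s
  exact Integrable.of_bound (by fun_prop) C (hμ.mono hC)

lemma analyticOnNhd_complexMGF_id_of_isCompact (hK : IsCompact K) (hμ : ∀ᵐ t ∂μ, t ∈ K) :
    AnalyticOnNhd ℂ (complexMGF id μ) univ := by
  simpa [integrableExpSet_id_eq_univ_of_isCompact hK hμ] using
    analyticOnNhd_complexMGF (X := id) (μ := μ)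

end CompactSupport

theorem AnalyticOnNhd.eq_of_not_countable_setOf_ofReal_eq {E : Type*} [NormedAddCommGroup E]
    [NormedSpace ℂ E] {f g : ℂ → E} (hf : AnalyticOnNhd ℂ f univ) (hg : AnalyticOnNhd ℂ g univ)
    (h : ¬ {x : ℝ | f x = g x}.Countable) : f = g := by
  have hclosed : IsClosed {x : ℝ | f x = g x} :=
    isClosed_eq (hf.continuous.comp Complex.continuous_ofReal)
      (hg.continuous.comp Complex.continuous_ofReal)
  obtain ⟨D, hD, ⟨x, hx⟩, hDsub⟩ := exists_perfect_nonempty_of_isClosed_of_not_countable hclosed h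
  have hacc : ∃ᶠ y : ℝ in 𝓝[≠] x, f y = g y :=
    (accPt_iff_frequently_nhdsNE.1 (hD.acc x hx)).mono fun y hy => hDsub hy
  have hmap : Tendsto ((↑) : ℝ → ℂ) (𝓝[≠] x) (𝓝[≠] (x : ℂ)) :=
    Complex.continuous_ofReal.continuousWithinAt.tendsto_nhdsWithin
      fun y hy => Complex.ofReal_injective.ne hy
  exact hf.eq_of_frequently_eq hg (hmap.frequently hacc)

theorem MeasureTheory.Measure.ext_of_not_countable_setOf_mgf_sq_add_eq {μ μ' : Measure ℝ}
    [IsFiniteMeasure μ] [IsFiniteMeasure μ'] {K : Set ℝ} (hK : IsCompact K)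
    (hμ : ∀ᵐ t ∂μ, t ∈ K) (hμ' : ∀ᵐ t ∂μ', t ∈ K) (c : ℝ)
    (h : ¬ {α : ℝ | mgf id μ (α ^ 2 + c) = mgf id μ' (α ^ 2 + c)}.Countable) : μ = μ' := by
  have hsq : AnalyticOnNhd ℂ (fun z : ℂ => z ^ 2 + c) univ := fun z _ => by fun_prop
  have hcomp := AnalyticOnNhd.eq_of_not_countable_setOf_ofReal_eq
    ((analyticOnNhd_complexMGF_id_of_isCompact hK hμ).comp hsq (mapsTo_univ _ _))
    ((analyticOnNhd_complexMGF_id_of_isCompact hK hμ').comp hsq (mapsTo_univ _ _))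
    (by simpa [← Complex.ofReal_pow, ← Complex.ofReal_add, complexMGF_ofReal] using h)
  refine Measure.ext_of_complexMGF_id_eq (funext fun w => ?_)
  obtain ⟨z, hz⟩ := IsAlgClosed.exists_pow_nat_eq (w - c) two_pos
  simpa [hz] using congr_fun hcomp z

section WithDensity

variable {α : Type*} [MeasurableSpace α] {ν : Measure α} {f : α → ℝ}

lemma ae_eq_zero_of_withDensity_ofReal_eq_neg (hf : Integrable f ν)
    (h : ν.withDensity (fun t => ENNReal.ofReal (f t))
      = ν.withDensity (fun t => ENNReal.ofReal (-f t))) : f =ᵐ[ν] 0 := by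
  have hfin : ∫⁻ t, ENNReal.ofReal (f t) ∂ν ≠ ⊤ :=
    (lintegral_mono fun t => ofReal_le_enorm (f t)).trans_lt hf.2 |>.ne
  have hae := (withDensity_eq_iff hf.1.aemeasurable.ennreal_ofReal
    hf.1.aemeasurable.neg.ennreal_ofReal hfin).1 h
  filter_upwards [hae] with t ht
  have hmax := congrArg ENNReal.toReal ht
  simp only [ENNReal.toReal_ofReal', Pi.neg_apply] at hmax
  simp only [Pi.zero_apply]
  grind

lemma integral_withDensity_ofReal_sub {g : α → ℝ} (hf : AEMeasurable f ν)
    (hfg : Integrable (fun t => g t * f t) ν) (hg : ∀ t, 0 ≤ g t) :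
    ∫ t, g t ∂ν.withDensity (fun t => ENNReal.ofReal (f t))
      - ∫ t, g t ∂ν.withDensity (fun t => ENNReal.ofReal (-f t)) = ∫ t, g t * f t ∂ν := by
  rw [integral_withDensity_eq_integral_toReal_smul₀ hf.ennreal_ofReal
      (ae_of_all _ fun _ => ENNReal.ofReal_lt_top),
    integral_withDensity_eq_integral_toReal_smul₀ (f := fun t => ENNReal.ofReal (-f t))
      hf.neg.ennreal_ofReal (ae_of_all _ fun _ => ENNReal.ofReal_lt_top),
    integral_eq_integral_pos_part_sub_integral_neg_part hfg]
  congr 1 <;> refine integral_congr_ae (ae_of_all _ fun t => ?_) <;>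
    simp only [smul_eq_mul, ENNReal.toReal_ofReal', Real.coe_toNNReal', max_mul_of_nonneg _ _ (hg t),
      zero_mul, neg_mul, mul_comm (f t)]

end WithDensity

theorem ae_eq_zero_of_not_countable_setOf_integral_exp_sq_add_mul_eq_zero {ν : Measure ℝ}
    {K : Set ℝ} (hK : IsCompact K) (hν : ∀ᵐ t ∂ν, t ∈ K) {f : ℝ → ℝ} (hf : Integrable f ν)
    (c : ℝ) (h : ¬ {α : ℝ | ∫ t, rexp ((α ^ 2 + c) * t) * f t ∂ν = 0}.Countable) :
    f =ᵐ[ν] 0 := by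
  have := isFiniteMeasure_withDensity_ofReal hf.2
  have := isFiniteMeasure_withDensity_ofReal hf.neg.2
  have hexp (s : ℝ) : Integrable (fun t => rexp (s * t) * f t) ν := by
    obtain ⟨C, hC⟩ := hK.exists_bound_exp_mul s
    exact hf.bdd_mul (by fun_prop) (hν.mono hC)
  refine ae_eq_zero_of_withDensity_ofReal_eq_neg hf
    (Measure.ext_of_not_countable_setOf_mgf_sq_add_eq hK
      ((withDensity_absolutelyContinuous _ _).ae_le hν)
      ((withDensity_absolutelyContinuous _ _).ae_le hν) c ?_)
  convert h using 4 with α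
  simp only [mgf, id_eq]
  rw [← sub_eq_zero, integral_withDensity_ofReal_sub hf.1.aemeasurable (hexp _)
    fun _ => (exp_pos _).le]

lemma Dker_eq_exp_mul_integral (φ : ℝ → ℝ) (α : ℝ) (n : ℤ) :
    Dker φ α n = rexp (-(α ^ 2 + (n : ℝ) ^ 2 * π ^ 2)) *
      ∫ t in Ioo (0:ℝ) 1, rexp ((α ^ 2 + (n : ℝ) ^ 2 * π ^ 2) * t) * φ t := by
  rw [Dker, ← integral_const_mul]
  congr 1 with t
  rw [← mul_assoc, ← Real.exp_add]
  ring_nf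

/-- If `φ ∈ L¹(0,1)` is not a.e. zero, then for each `n ∈ ℤ` the zero set of `α ↦ D(φ)(α,n)`
is Lebesgue-null; consequently, for a.e. `α ∈ ℝ`, `D(φ)(α,n) ≠ 0` for every `n ∈ ℤ`. -/
theorem Dker_ne_zero_ae
    (φ : ℝ → ℝ) (hφ : IntegrableOn φ (Ioo (0:ℝ) 1))
    (hφ0 : ¬ (∀ᵐ t ∂(volume.restrict (Ioo (0:ℝ) 1)), φ t = 0)) :
    (∀ n : ℤ, volume {α : ℝ | Dker φ α n = 0} = 0)
    ∧ (∀ᵐ α : ℝ, ∀ n : ℤ, Dker φ α n ≠ 0) := by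
  have hnull (n : ℤ) : volume {α : ℝ | Dker φ α n = 0} = 0 := by
    refine Countable.measure_zero (not_not.1 fun hunc => hφ0 ?_) _
    refine ae_eq_zero_of_not_countable_setOf_integral_exp_sq_add_mul_eq_zero isCompact_Icc
      ((ae_restrict_mem measurableSet_Ioo).mono fun _ ht => Ioo_subset_Icc_self ht) hφ
      ((n : ℝ) ^ 2 * π ^ 2) ?_
    simpa only [Dker_eq_exp_mul_integral, mul_eq_zero, (exp_pos _).ne', false_or] using hunc
  exact ⟨hnull, ae_all_iff.2 fun n => measure_eq_zero_iff_ae_notMem.1 (hnull n)⟩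
end

section
/- Let φ ∈ L¹(0,1), λ ∈ (0,1) and C₀ > 0 be such that φ(t) ≥ C₀ for a.e. t ∈ (λ,1). Then there exists R₁ > 0 such that for all α ∈ ℝ and n ∈ ℤ with |α| ≥ R₁ or |n| ≥ R₁, one has D(φ)(α,n) ≥ C₀ / (2(α² + n²π²)). -/
open MeasureTheory Real Set

/-!
Write `μ = α² + n²π²` and split `(0,1)` at `λ`. On `(λ,1)` the integrand is at least
`C₀ e^{μ(t-1)}`, which integrates to `C₀ (1 - e^{-μ(1-λ)}) / μ`; on `(0,λ]` the kernel is
at most `e^{-μ(1-λ)}`, so that piece is at least `-e^{-μ(1-λ)} ‖φ‖₁`. Both error terms decay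
exponentially in `μ`, so for `μ` large the total is at least `C₀ / (2μ)`; and `μ ≥ α²`,
`μ ≥ n²`, so `μ` is large as soon as `|α|` or `|n|` is.
-/

open Filter Topology

lemma integral_exp_mul_sub_one (μ a : ℝ) (hμ : μ ≠ 0) :
    ∫ t in a..1, exp (μ * (t - 1)) = (1 - exp (μ * (a - 1))) / μ := by
  simp only [mul_sub, mul_one]
  rw [intervalIntegral.integral_comp_mul_sub (fun x => exp x) hμ, integral_exp, mul_one,
    sub_self, exp_zero, smul_eq_mul, inv_mul_eq_div]

lemma MeasureTheory.IntegrableOn.exp_mul_sub_one_mul {φ : ℝ → ℝ} {a b : ℝ}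
    (hφ : IntegrableOn φ (Ioo a b)) (μ : ℝ) :
    IntegrableOn (fun t => exp (μ * (t - 1)) * φ t) (Ioo a b) :=
  hφ.continuousOn_mul_of_subset (by fun_prop) isCompact_Icc measurableSet_Ioo Ioo_subset_Icc_self

section Split

variable {φ : ℝ → ℝ} {μ lam C₀ : ℝ}

lemma neg_exp_mul_le_setIntegral_Ioc (hφ : IntegrableOn φ (Ioo 0 1)) (hμ : 0 ≤ μ)
    (hlam : lam < 1) :
    -(exp (μ * (lam - 1)) * ∫ t in Ioo 0 1, |φ t|) ≤
      ∫ t in Ioc 0 lam, exp (μ * (t - 1)) * φ t := by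
  have hsub : Ioc 0 lam ⊆ Ioo 0 1 := Ioc_subset_Ioo_right hlam
  have habs : IntegrableOn (fun t => |φ t|) (Ioc 0 lam) := (hφ.mono_set hsub).abs
  have hkernel : ∀ t ∈ Ioc (0 : ℝ) lam,
      ‖exp (μ * (t - 1)) * φ t‖ ≤ exp (μ * (lam - 1)) * |φ t| := by
    intro t ht
    rw [norm_mul, norm_of_nonneg (exp_pos _).le, Real.norm_eq_abs]
    gcongr
    linarith [ht.2]
  have hnorm : ‖∫ t in Ioc 0 lam, exp (μ * (t - 1)) * φ t‖ ≤
      exp (μ * (lam - 1)) * ∫ t in Ioo 0 1, |φ t| :=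
    calc ‖∫ t in Ioc 0 lam, exp (μ * (t - 1)) * φ t‖
        ≤ ∫ t in Ioc 0 lam, exp (μ * (lam - 1)) * |φ t| :=
          norm_integral_le_of_norm_le (habs.const_mul _)
            (ae_restrict_of_forall_mem measurableSet_Ioc hkernel)
      _ = exp (μ * (lam - 1)) * ∫ t in Ioc 0 lam, |φ t| := integral_const_mul _ _
      _ ≤ exp (μ * (lam - 1)) * ∫ t in Ioo 0 1, |φ t| :=
          mul_le_mul_of_nonneg_left (setIntegral_mono_set hφ.abs
            (ae_of_all _ fun t => abs_nonneg (φ t)) hsub.eventuallyLE) (exp_pos _).le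
  exact neg_le_of_abs_le hnorm

lemma mul_le_setIntegral_Ioo (hφ : IntegrableOn φ (Ioo lam 1)) (hμ : μ ≠ 0) (hlam : lam ≤ 1)
    (hH : ∀ᵐ t ∂(volume.restrict (Ioo lam 1)), C₀ ≤ φ t) :
    C₀ * ((1 - exp (μ * (lam - 1))) / μ) ≤ ∫ t in Ioo lam 1, exp (μ * (t - 1)) * φ t := by
  rw [← integral_exp_mul_sub_one μ lam hμ, intervalIntegral.integral_of_le hlam,
    integral_Ioc_eq_integral_Ioo, ← integral_const_mul]
  have hkernel : IntegrableOn (fun t => exp (μ * (t - 1))) (Ioo lam 1) :=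
    (Continuous.integrableOn_Icc (by fun_prop)).mono_set Ioo_subset_Icc_self
  refine integral_mono_ae (hkernel.const_mul C₀) (hφ.exp_mul_sub_one_mul μ) ?_
  filter_upwards [hH] with t ht
  rw [mul_comm C₀]
  exact mul_le_mul_of_nonneg_left ht (exp_pos _).le

lemma le_integral_exp_mul_sub_one_mul (hφ : IntegrableOn φ (Ioo 0 1)) (hμ : 0 < μ)
    (hlam : lam ∈ Ico 0 1) (hH : ∀ᵐ t ∂(volume.restrict (Ioo lam 1)), C₀ ≤ φ t) :
    C₀ * ((1 - exp (μ * (lam - 1))) / μ) - exp (μ * (lam - 1)) * ∫ t in Ioo 0 1, |φ t| ≤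
      ∫ t in Ioo 0 1, exp (μ * (t - 1)) * φ t := by
  have hsplit : Ioc 0 lam ∪ Ioo lam 1 = Ioo (0 : ℝ) 1 := Ioc_union_Ioo_eq_Ioo hlam.1 hlam.2
  have hint := hφ.exp_mul_sub_one_mul μ
  have hsum : ∫ t in Ioo 0 1, exp (μ * (t - 1)) * φ t =
      (∫ t in Ioc 0 lam, exp (μ * (t - 1)) * φ t) +
        ∫ t in Ioo lam 1, exp (μ * (t - 1)) * φ t := by
    rw [← setIntegral_union (Ioc_disjoint_Ioi_same.mono_right Ioo_subset_Ioi_self)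
      measurableSet_Ioo (hint.mono_set (hsplit ▸ subset_union_left))
      (hint.mono_set (hsplit ▸ subset_union_right)), hsplit]
  have hhead := neg_exp_mul_le_setIntegral_Ioc hφ hμ.le hlam.2
  have htail := mul_le_setIntegral_Ioo (hφ.mono_set (hsplit ▸ subset_union_right)) hμ.ne'
    hlam.2.le hH
  linarith

end Split

lemma eventually_div_two_mul_le_of_lt_one {lam C₀ : ℝ} (hlam : lam < 1) (hC₀ : 0 < C₀)
    (M : ℝ) :
    ∀ᶠ μ in atTop,
      C₀ / (2 * μ) ≤ C₀ * ((1 - exp (μ * (lam - 1))) / μ) - exp (μ * (lam - 1)) * M := by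
  have hexp : Tendsto (fun μ => exp (μ * (lam - 1))) atTop (𝓝 0) :=
    tendsto_exp_atBot.comp (tendsto_id.atTop_mul_const_of_neg (by linarith))
  have hmul_exp : Tendsto (fun μ => μ * exp (μ * (lam - 1))) atTop (𝓝 0) := by
    simpa [mul_comm _ (lam - 1)] using tendsto_rpow_mul_exp_neg_mul_atTop_nhds_zero 1 (1 - lam)
      (by linarith)
  have herror : Tendsto (fun μ => C₀ * exp (μ * (lam - 1)) + μ * exp (μ * (lam - 1)) * M)
      atTop (𝓝 0) := by
    simpa using (hexp.const_mul C₀).add (hmul_exp.mul_const M)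
  filter_upwards [herror.eventually (gt_mem_nhds (half_pos hC₀)), eventually_gt_atTop 0]
    with μ hsmall hμ
  have hdiff :
      C₀ * ((1 - exp (μ * (lam - 1))) / μ) - exp (μ * (lam - 1)) * M - C₀ / (2 * μ) =
      (C₀ / 2 - (C₀ * exp (μ * (lam - 1)) + μ * exp (μ * (lam - 1)) * M)) / μ := by
    field_simp
    ring
  have hgap := div_nonneg (sub_nonneg.mpr hsmall.le) hμ.le
  linarith

lemma sq_le_sq_add_intCast_sq_mul_pi_sq {R α : ℝ} {n : ℤ} (hR : 0 ≤ R)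
    (h : R ≤ |α| ∨ R ≤ |(n : ℝ)|) : R ^ 2 ≤ α ^ 2 + (n : ℝ) ^ 2 * π ^ 2 := by
  have hpi : 1 ≤ π ^ 2 := one_le_pow₀ (by linarith [pi_gt_three])
  rcases h with h | h
  · nlinarith [sq_abs α, pow_le_pow_left₀ hR h 2, sq_nonneg (n : ℝ)]
  · nlinarith [sq_abs (n : ℝ), pow_le_pow_left₀ hR h 2, sq_nonneg α]

/-- If `φ ∈ L¹(0,1)` satisfies `φ(t) ≥ C₀` for a.e. `t ∈ (λ,1)` with `λ ∈ (0,1)`, `C₀ > 0`,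
then there is `R₁ > 0` such that `D(φ)(α,n) ≥ C₀/(2(α²+n²π²))` whenever `|α| ≥ R₁` or
`|n| ≥ R₁`. -/
theorem Dker_lower_bound
    (φ : ℝ → ℝ) (hφ : IntegrableOn φ (Ioo (0:ℝ) 1))
    (lam C₀ : ℝ) (hlam : lam ∈ Ioo (0:ℝ) 1) (hC₀ : 0 < C₀)
    (hH : ∀ᵐ t ∂(volume.restrict (Ioo lam 1)), C₀ ≤ φ t) :
    ∃ R₁ > 0, ∀ (α : ℝ) (n : ℤ), (R₁ ≤ |α| ∨ R₁ ≤ |(n:ℝ)|) →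
      C₀ / (2 * (α^2 + (n:ℝ)^2 * Real.pi^2)) ≤ Dker φ α n := by
  obtain ⟨X, hX⟩ := eventually_atTop.mp
    ((eventually_div_two_mul_le_of_lt_one hlam.2 hC₀ (∫ t in Ioo 0 1, |φ t|)).and
      (eventually_gt_atTop 0))
  refine ⟨max X 1, by positivity, fun α n hR => ?_⟩
  have hμ : max X 1 ≤ α ^ 2 + (n : ℝ) ^ 2 * π ^ 2 := by
    have := sq_le_sq_add_intCast_sq_mul_pi_sq (by positivity) hR
    nlinarith [le_max_right X 1]
  obtain ⟨hlower, hμ0⟩ := hX _ (le_of_max_le_left hμ)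
  exact hlower.trans (le_integral_exp_mul_sub_one_mul hφ hμ0 ⟨hlam.1.le, hlam.2⟩ hH)
end

section
/- Let φ ∈ L¹(0,1) be not almost everywhere zero and let n ∈ ℤ. Then the function φₙ : ℂ → ℂ defined by φₙ(z) = ∫₀¹ e^{(z²+n²π²)(t−1)} φ(t) dt is entire (complex differentiable on all of ℂ) and is not identically zero. -/
/-!
Write `φₙ(z) = G(z² + n²π²)` with `G(w) = ∫₀¹ e^{w(t-1)} φ(t) dt`. Since the kernel `t - 1` is
bounded, `G` can be differentiated under the integral sign, so `G` and hence `φₙ` are entire.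
As `z ↦ z² + n²π²` is onto `ℂ`, `φₙ ≡ 0` forces `G ≡ 0`; on the imaginary axis `G` is, up to a
unimodular factor, the Fourier transform of `φ` on `(0,1)`, and the Fourier transform is injective
on `L¹`.
-/

open MeasureTheory Real Set Complex

open scoped RealInnerProductSpace

theorem norm_cexp_mul_le {w z : ℂ} {R C : ℝ} (hw : ‖w‖ ≤ R) (hz : ‖z‖ ≤ C) :
    ‖cexp (w * z)‖ ≤ Real.exp (R * C) := by
  refine (norm_exp_le_exp_norm _).trans (Real.exp_le_exp.2 ?_)
  rw [norm_mul]
  exact mul_le_mul hw hz (norm_nonneg z) ((norm_nonneg w).trans hw)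

theorem differentiable_integral_cexp_mul_mul {α : Type*} [MeasurableSpace α] {μ : Measure α}
    {f g : α → ℂ} (hf : Integrable f μ) (hg : AEStronglyMeasurable g μ) {C : ℝ}
    (hgC : ∀ᵐ a ∂μ, ‖g a‖ ≤ C) :
    Differentiable ℂ (fun w : ℂ => ∫ a, cexp (w * g a) * f a ∂μ) := by
  intro w₀
  set R := ‖w₀‖ + 1
  have hexp_meas : ∀ w : ℂ, AEStronglyMeasurable (fun a => cexp (w * g a)) μ := fun w =>
    continuous_exp.comp_aestronglyMeasurable (hg.const_mul w)
  have hexp_le : ∀ᵐ a ∂μ, ∀ w ∈ Metric.ball w₀ 1, ‖cexp (w * g a)‖ ≤ Real.exp (R * C) := by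
    filter_upwards [hgC] with a ha w hw
    refine norm_cexp_mul_le ?_ ha
    have := norm_le_norm_add_norm_sub' w w₀
    rw [Metric.mem_ball, dist_eq_norm] at hw
    linarith
  have hderiv_le : ∀ᵐ a ∂μ, ∀ w ∈ Metric.ball w₀ 1,
      ‖cexp (w * g a) * g a * f a‖ ≤ Real.exp (R * C) * C * ‖f a‖ := by
    filter_upwards [hexp_le, hgC] with a hexp hga w hw
    rw [norm_mul, norm_mul]
    gcongr
    exact hexp w hw
  have hF_int : Integrable (fun a => cexp (w₀ * g a) * f a) μ :=
    hf.bdd_mul (hexp_meas w₀) (hexp_le.mono fun a h => h w₀ (Metric.mem_ball_self one_pos))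
  have hF'_meas : AEStronglyMeasurable (fun a => cexp (w₀ * g a) * g a * f a) μ :=
    ((hexp_meas w₀).mul hg).mul hf.1
  have hF_deriv : ∀ᵐ a ∂μ, ∀ w ∈ Metric.ball w₀ 1,
      HasDerivAt (fun w => cexp (w * g a) * f a) (cexp (w * g a) * g a * f a) w :=
    ae_of_all _ fun a w _ => by
      simpa using (((hasDerivAt_id w).mul_const (g a)).cexp).mul_const (f a)
  exact (hasDerivAt_integral_of_dominated_loc_of_deriv_le (Metric.ball_mem_nhds w₀ one_pos)
    (.of_forall fun w => (hexp_meas w).mul hf.1) hF_int hF'_meas hderiv_le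
    (hf.norm.const_mul _) hF_deriv).2.differentiableAt

section FourierUniqueness

variable {E : Type*} [NormedAddCommGroup E] [InnerProductSpace ℝ E] [MeasurableSpace E]
  {μ : Measure E} {f : E → ℝ}

theorem charFun_withDensity_ofReal (hf : AEMeasurable f μ) (t : E) :
    charFun (μ.withDensity fun x => ENNReal.ofReal (f x)) t
      = ∫ x, cexp (⟪x, t⟫ * I) * (max (f x) 0 : ℝ) ∂μ := by
  rw [charFun_apply, integral_withDensity_eq_integral_toReal_smul₀ hf.ennreal_ofReal
    (ae_of_all _ fun _ => ENNReal.ofReal_lt_top)]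
  simp_rw [ENNReal.toReal_ofReal', Complex.real_smul, mul_comm]

theorem eq_zero_of_ofReal_eq_ofReal_neg {a : ℝ} (h : ENNReal.ofReal a = ENNReal.ofReal (-a)) :
    a = 0 := by
  rcases le_total a 0 with ha | ha
  · rw [ENNReal.ofReal_of_nonpos ha, eq_comm, ENNReal.ofReal_eq_zero] at h
    linarith
  · rw [ENNReal.ofReal_of_nonpos (neg_nonpos.2 ha), ENNReal.ofReal_eq_zero] at h
    linarith

/-- The finite measures with densities `f⁺` and `f⁻` have the same characteristic function,
hence coincide. -/
theorem ae_eq_zero_of_forall_integral_cexp_inner_mul_eq_zero [CompleteSpace E] [BorelSpace E]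
    [SecondCountableTopology E] (hf : Integrable f μ)
    (h : ∀ t : E, ∫ x, cexp (⟪x, t⟫ * I) * f x ∂μ = 0) : f =ᵐ[μ] 0 := by
  have hf_neg : Integrable (fun x => -f x) μ := hf.neg
  have := isFiniteMeasure_withDensity_ofReal hf.2
  have := isFiniteMeasure_withDensity_ofReal hf_neg.2
  have hchar : charFun (μ.withDensity fun x => ENNReal.ofReal (f x))
      = charFun (μ.withDensity fun x => ENNReal.ofReal (-f x)) := by
    ext t
    have hbdd : ∀ᵐ x ∂μ, ‖cexp (⟪x, t⟫ * I)‖ ≤ 1 :=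
      ae_of_all _ fun x => (norm_exp_ofReal_mul_I _).le
    have hmeas : AEStronglyMeasurable (fun x => cexp (⟪x, t⟫ * I)) μ := by fun_prop
    have hint : ∀ {g : E → ℝ}, Integrable g μ →
        Integrable (fun x => cexp (⟪x, t⟫ * I) * (max (g x) 0 : ℝ)) μ := fun hg =>
      hg.pos_part.ofReal.bdd_mul hmeas hbdd
    rw [charFun_withDensity_ofReal hf.aemeasurable, charFun_withDensity_ofReal hf_neg.aemeasurable,
      ← sub_eq_zero, ← integral_sub (hint hf) (hint hf_neg), ← h t]
    congr 1 with x
    rw [← mul_sub, ← ofReal_sub, max_zero_sub_max_neg_zero_eq_self]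
  have hdens := (withDensity_eq_iff hf.aemeasurable.ennreal_ofReal
    hf_neg.aemeasurable.ennreal_ofReal hf.lintegral_lt_top.ne).1 (Measure.ext_of_charFun hchar)
  filter_upwards [hdens] with x hx using eq_zero_of_ofReal_eq_ofReal_neg hx

end FourierUniqueness

/-- If `φ ∈ L¹(0,1)` is not a.e. zero and `n ∈ ℤ`, then
`φₙ(z) = ∫₀¹ e^{(z²+n²π²)(t−1)} φ(t) dt` is an entire function which is not identically
zero. -/
theorem phi_n_entire_nontrivial
    (φ : ℝ → ℝ) (hφ : IntegrableOn φ (Ioo (0:ℝ) 1))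
    (hφ0 : ¬ (∀ᵐ t ∂(volume.restrict (Ioo (0:ℝ) 1)), φ t = 0)) (n : ℤ) :
    Differentiable ℂ (fun z : ℂ =>
        ∫ t in Ioo (0:ℝ) 1,
          Complex.exp ((z^2 + ((n:ℝ)^2 * Real.pi^2 : ℝ)) * ((t:ℂ) - 1)) * (φ t : ℂ))
    ∧ ¬ (∀ z : ℂ,
        (∫ t in Ioo (0:ℝ) 1,
          Complex.exp ((z^2 + ((n:ℝ)^2 * Real.pi^2 : ℝ)) * ((t:ℂ) - 1)) * (φ t : ℂ)) = 0) := by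
  set c : ℂ := (((n:ℝ)^2 * Real.pi^2 : ℝ) : ℂ)
  set G : ℂ → ℂ := fun w => ∫ t in Ioo (0:ℝ) 1, cexp (w * ((t:ℂ) - 1)) * (φ t : ℂ)
  have hkernel : ∀ᵐ t : ℝ ∂(volume.restrict (Ioo (0:ℝ) 1)), ‖(t:ℂ) - 1‖ ≤ 1 := by
    filter_upwards [ae_restrict_mem measurableSet_Ioo] with t ht
    rw [← ofReal_one, ← ofReal_sub, norm_real, Real.norm_eq_abs, abs_le]
    constructor <;> linarith [ht.1, ht.2]
  have hG : Differentiable ℂ G :=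
    differentiable_integral_cexp_mul_mul hφ.ofReal (by fun_prop) hkernel
  refine ⟨hG.comp ((differentiable_id.pow 2).add_const c), fun hzero => hφ0 ?_⟩
  have hG_zero : ∀ w, G w = 0 := fun w => by
    obtain ⟨z, hz⟩ := IsAlgClosed.exists_pow_nat_eq (w - c) two_pos
    simpa [G, hz] using hzero z
  refine ae_eq_zero_of_forall_integral_cexp_inner_mul_eq_zero hφ fun ξ => ?_
  calc _ = cexp (ξ * I) * G (ξ * I) := by
        rw [← integral_const_mul]
        congr 1 with t
        rw [← mul_assoc, ← Complex.exp_add, RCLike.inner_apply, conj_trivial]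
        congr 2
        push_cast
        ring
    _ = 0 := by rw [hG_zero, mul_zero]
end
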